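/- Let L = L₀ ⊕ L₁ be a restricted Lie superalgebra over a field of characteristic p > 2 such that every ad x with x ∈ L₀ is nilpotent on L, L contains a homogeneous restricted ideal A of finite codimension with A' finite-dimensional and (A',A') = 0, and either (L₁,L₁) is p-nilpotent or (L₀,L₁) = 0. Then L is nilpotent. -/

import Mathlib

/-- A Lie superalgebra structure on an `F`-module `L`: an internal direct sum
decomposition `L = L₀ ⊕ L₁` together with a bilinear bracket satisfying the grading,
super-anticommutativity and super-Jacobi identities (the latter two stated for
homogeneous arguments and extended by bilinearity). -/
structure LieSuperStruct (F : Type*) (L : Type*) [Field F] [AddCommGroup L]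
    [Module F L] where
  L0 : Submodule F L
  L1 : Submodule F L
  compl : IsCompl L0 L1
  bracket : L →ₗ[F] L →ₗ[F] L
  grade00 : ∀ x ∈ L0, ∀ y ∈ L0, bracket x y ∈ L0
  grade01 : ∀ x ∈ L0, ∀ y ∈ L1, bracket x y ∈ L1
  grade10 : ∀ x ∈ L1, ∀ y ∈ L0, bracket x y ∈ L1
  grade11 : ∀ x ∈ L1, ∀ y ∈ L1, bracket x y ∈ L0
  anti_even : ∀ x ∈ L0, ∀ y : L, bracket x y = - bracket y x
  anti_odd : ∀ x ∈ L1, ∀ y ∈ L1, bracket x y = bracket y x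
  jacobi_even : ∀ x ∈ L0, ∀ y z : L,
    bracket x (bracket y z) = bracket (bracket x y) z + bracket y (bracket x z)
  jacobi_odd_even : ∀ x ∈ L1, ∀ y ∈ L0, ∀ z : L,
    bracket x (bracket y z) = bracket (bracket x y) z + bracket y (bracket x z)
  jacobi_odd_odd : ∀ x ∈ L1, ∀ y ∈ L1, ∀ z : L,
    bracket x (bracket y z) = bracket (bracket x y) z - bracket y (bracket x z)

namespace LieSuperStruct

variable {F L : Type*} [Field F] [AddCommGroup L] [Module F L]

/-- The span of all brackets `(x, y)` with `x ∈ M`, `y ∈ N`. -/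
def bracketSpan (S : LieSuperStruct F L) (M N : Submodule F L) : Submodule F L :=
  Submodule.span F {w | ∃ x ∈ M, ∃ y ∈ N, w = S.bracket x y}

/-- Lower central series of a subalgebra `N`: `γ₁ = N`, `γ_{n+1} = (γₙ, N)`. -/
def lcsOn (S : LieSuperStruct F L) (N : Submodule F L) : ℕ → Submodule F L
  | 0 => N
  | n + 1 => S.bracketSpan (S.lcsOn N n) N

/-- Lower central series of `L` itself. -/
def lcs (S : LieSuperStruct F L) : ℕ → Submodule F L := S.lcsOn ⊤

/-- A Lie superalgebra is nilpotent if its lower central series vanishes. -/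
def IsNilpotent (S : LieSuperStruct F L) : Prop := ∃ n, S.lcs n = ⊥

/-- `A` is an ideal of `L`. -/
def IsIdeal (S : LieSuperStruct F L) (A : Submodule F L) : Prop :=
  ∀ x ∈ A, ∀ y : L, S.bracket x y ∈ A ∧ S.bracket y x ∈ A

/-- `A` is a homogeneous (graded) submodule. -/
def IsHomogeneous (S : LieSuperStruct F L) (A : Submodule F L) : Prop :=
  A = (A ⊓ S.L0) ⊔ (A ⊓ S.L1)

/-- The adjoint map of `x`. -/
def ad (S : LieSuperStruct F L) (x : L) : Module.End F L := S.bracket x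

end LieSuperStruct

/-- The left-normed `n`-fold iterated Lie commutator `[x, y, y, …, y]` in an
associative ring. -/
def engelIter {U : Type*} [Ring U] (y : U) (n : ℕ) (x : U) : U :=
  (fun a => a * y - y * a)^[n] x

/-- An associative ring is bounded Lie Engel if it satisfies `[x, y, …, y] = 0`
(`y` repeated `n` times) identically for some `n ≥ 1`. -/
def IsBoundedLieEngel (U : Type*) [Ring U] : Prop :=
  ∃ n : ℕ, 0 < n ∧ ∀ x y : U, engelIter y n x = 0

/-- The (two-sided) ideal of an associative `F`-algebra generated by all
commutators, as an `F`-submodule. -/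
def commIdeal (F U : Type*) [Field F] [Ring U] [Algebra F U] : Submodule F U :=
  Submodule.span F {w | ∃ a x y b : U, w = a * (x * y - y * x) * b}

/-- Lower central series of the associative algebra `U` viewed as a Lie algebra
under the commutator. -/
def assocLcs (F U : Type*) [Field F] [Ring U] [Algebra F U] : ℕ → Submodule F U
  | 0 => ⊤
  | n + 1 => Submodule.span F {w | ∃ a ∈ assocLcs F U n, ∃ b : U, w = a * b - b * a}

/-- `U` is Lie nilpotent: the lower central series of `(U, [·,·])` terminates. -/
def IsLieNilpotentAlg (F U : Type*) [Field F] [Ring U] [Algebra F U] : Prop :=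
  ∃ n, assocLcs F U n = ⊥

/-- `U` satisfies a (nontrivial) polynomial identity. -/
def IsPI (F U : Type*) [Field F] [Ring U] [Algebra F U] : Prop :=
  ∃ (n : ℕ) (f : FreeAlgebra F (Fin n)), f ≠ 0 ∧
    ∀ v : Fin n → U, FreeAlgebra.lift F v f = 0

/-- `U` satisfies a non-matrix polynomial identity: a PI which fails in `M₂(F)`. -/
def IsNonMatrixPI (F U : Type*) [Field F] [Ring U] [Algebra F U] : Prop :=
  ∃ (n : ℕ) (f : FreeAlgebra F (Fin n)),
    (∀ v : Fin n → U, FreeAlgebra.lift F v f = 0) ∧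
    ∃ w : Fin n → Matrix (Fin 2) (Fin 2) F, FreeAlgebra.lift F w f ≠ 0

/-- `U` together with `ι : L → U` is (a realization of) the universal enveloping
algebra of the Lie superalgebra `L`: `ι` is an injective linear map satisfying the
super-commutation relations, its image generates `U`, and the pair has the
universal property. -/
structure IsUEA (F : Type*) {L : Type*} [Field F] [AddCommGroup L] [Module F L]
    (S : LieSuperStruct F L) (U : Type*) [Ring U] [Algebra F U]
    (ι : L →ₗ[F] U) : Prop where
  rel_even : ∀ x ∈ S.L0, ∀ y : L, ι x * ι y - ι y * ι x = ι (S.bracket x y)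
  rel_odd : ∀ x ∈ S.L1, ∀ y ∈ S.L1, ι x * ι y + ι y * ι x = ι (S.bracket x y)
  inj : Function.Injective ι
  gen : Algebra.adjoin F (Set.range ι) = ⊤
  univ : ∀ (B : Type) [Ring B] [Algebra F B] (φ : L →ₗ[F] B),
    (∀ x ∈ S.L0, ∀ y : L, φ x * φ y - φ y * φ x = φ (S.bracket x y)) →
    (∀ x ∈ S.L1, ∀ y ∈ S.L1, φ x * φ y + φ y * φ x = φ (S.bracket x y)) →
    ∃! ψ : U →ₐ[F] B, ∀ x : L, ψ (ι x) = φ x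

/-- A restricted Lie superalgebra: a Lie superalgebra together with a `p`-map on
the even part satisfying `ad (x^{[p]}) = (ad x)^p` and `(c • x)^{[p]} = c^p • x^{[p]}`. -/
structure RestrictedLieSuperStruct (F : Type*) (L : Type*) [Field F]
    [AddCommGroup L] [Module F L] (p : ℕ) extends LieSuperStruct F L where
  pmap : L → L
  pmap_mem : ∀ x ∈ L0, pmap x ∈ L0
  pmap_smul : ∀ (c : F), ∀ x ∈ L0, pmap (c • x) = c ^ p • pmap x
  pmap_ad : ∀ x ∈ L0, ∀ y : L,
    bracket (pmap x) y = ((bracket x : Module.End F L) ^ p) y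

namespace RestrictedLieSuperStruct

variable {F L : Type*} [Field F] [AddCommGroup L] [Module F L] {p : ℕ}

/-- A subset of the even part is `p`-nilpotent (with bounded exponent) if some
iterate of the `p`-map kills all of its elements. -/
def IsPNilpotentSet (S : RestrictedLieSuperStruct F L p) (T : Set L) : Prop :=
  ∃ n : ℕ, ∀ x ∈ T, S.pmap^[n] x = 0

/-- `A` is a restricted (i.e. `p`-map closed) submodule. -/
def IsRestricted (S : RestrictedLieSuperStruct F L p) (A : Submodule F L) : Prop :=
  ∀ x ∈ A, x ∈ S.L0 → S.pmap x ∈ A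

end RestrictedLieSuperStruct

/-- `u` together with `ι : L → u` is (a realization of) the restricted enveloping
algebra of the restricted Lie superalgebra `L`. -/
structure IsRUEA (F : Type*) {L : Type*} [Field F] [AddCommGroup L] [Module F L]
    {p : ℕ} (S : RestrictedLieSuperStruct F L p) (U : Type*) [Ring U]
    [Algebra F U] (ι : L →ₗ[F] U) : Prop where
  rel_even : ∀ x ∈ S.L0, ∀ y : L, ι x * ι y - ι y * ι x = ι (S.bracket x y)
  rel_odd : ∀ x ∈ S.L1, ∀ y ∈ S.L1, ι x * ι y + ι y * ι x = ι (S.bracket x y)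
  rel_p : ∀ x ∈ S.L0, ι (S.pmap x) = ι x ^ p
  inj : Function.Injective ι
  gen : Algebra.adjoin F (Set.range ι) = ⊤
  univ : ∀ (B : Type) [Ring B] [Algebra F B] (φ : L →ₗ[F] B),
    (∀ x ∈ S.L0, ∀ y : L, φ x * φ y - φ y * φ x = φ (S.bracket x y)) →
    (∀ x ∈ S.L1, ∀ y ∈ S.L1, φ x * φ y + φ y * φ x = φ (S.bracket x y)) →
    (∀ x ∈ S.L0, φ (S.pmap x) = φ x ^ p) →
    ∃! ψ : U →ₐ[F] B, ∀ x : L, ψ (ι x) = φ x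


/-!
For a finite-dimensional Lie superalgebra `G = G₀ ⊕ G₁` of endomorphisms of a vector space whose
even elements are nilpotent (the odd ones then are too, as `z² = ½ [z, z]`), a super version of
Engel's theorem, proved through a maximal proper super-subalgebra, gives a nonzero vector killed by
`G`. Applied to the adjoint action of `G` on itself it yields a nonzero nilpotent `c ∈ G` that
super-commutes with `G`. Then `G` preserves the flag of the `im cⁱ` and acts on each layer through
a smaller algebra of the same kind, so by induction on `dim G` every product of boundedly many
elements of `G` vanishes.

Apply this to `ad L` acting on the layers of `L ⊇ A ⊇ A' ⊇ 0`: on `L / A` and `A / A'` it factors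
through the finite-dimensional `L / A`, because `A` is an ideal and `A' = (A, A)`, while `A'` is
finite-dimensional itself. So `ad x₁ ⋯ ad x_N = 0` for some `N`, and as the terms of the lower
central series are homogeneous, super-anticommutativity turns this into `L^N = 0`.
-/

open Module

universe u

section SuperSubalgebra

variable {F A B : Type*} [Field F] [Ring A] [Algebra F A] [Ring B] [Algebra F B]

structure IsSuperSubalgebra (G0 G1 : Submodule F A) : Prop where
  commutator_mem : ∀ a ∈ G0, ∀ b ∈ G0, a * b - b * a ∈ G0
  commutator_mem_odd : ∀ a ∈ G0, ∀ z ∈ G1, a * z - z * a ∈ G1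
  anticommutator_mem : ∀ z ∈ G1, ∀ w ∈ G1, z * w + w * z ∈ G0

lemma Submodule.mem_sup_span_singleton {M : Type*} [AddCommGroup M] [Module F M]
    {p : Submodule F M} {a x : M} : x ∈ p ⊔ F ∙ a ↔ ∃ h ∈ p, ∃ r : F, x = h + r • a := by
  simp only [Submodule.mem_sup, Submodule.mem_span_singleton]
  constructor
  · rintro ⟨h, hh, _, ⟨r, rfl⟩, rfl⟩
    exact ⟨h, hh, r, rfl⟩
  · rintro ⟨h, hh, r, rfl⟩
    exact ⟨h, hh, _, ⟨r, rfl⟩, rfl⟩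

namespace IsSuperSubalgebra

variable {G0 G1 : Submodule F A}

lemma bot : IsSuperSubalgebra (⊥ : Submodule F A) ⊥ where
  commutator_mem a ha _ _ := by simp [(Submodule.mem_bot F).1 ha]
  commutator_mem_odd a ha _ _ := by simp [(Submodule.mem_bot F).1 ha]
  anticommutator_mem z hz _ _ := by simp [(Submodule.mem_bot F).1 hz]

lemma map (h : IsSuperSubalgebra G0 G1) (φ : A →ₐ[F] B) :
    IsSuperSubalgebra (G0.map φ.toLinearMap) (G1.map φ.toLinearMap) where
  commutator_mem := by
    rintro _ ⟨a, ha, rfl⟩ _ ⟨b, hb, rfl⟩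
    exact ⟨_, h.commutator_mem a ha b hb, by simp⟩
  commutator_mem_odd := by
    rintro _ ⟨a, ha, rfl⟩ _ ⟨z, hz, rfl⟩
    exact ⟨_, h.commutator_mem_odd a ha z hz, by simp⟩
  anticommutator_mem := by
    rintro _ ⟨z, hz, rfl⟩ _ ⟨w, hw, rfl⟩
    exact ⟨_, h.anticommutator_mem z hz w hw, by simp⟩

lemma comap {G0 G1 : Submodule F B} (h : IsSuperSubalgebra G0 G1) (φ : A →ₐ[F] B) :
    IsSuperSubalgebra (G0.comap φ.toLinearMap) (G1.comap φ.toLinearMap) where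
  commutator_mem a ha b hb := by simpa using h.commutator_mem _ ha _ hb
  commutator_mem_odd a ha z hz := by simpa using h.commutator_mem_odd _ ha _ hz
  anticommutator_mem z hz w hw := by simpa using h.anticommutator_mem _ hz _ hw

lemma commutator_mem_odd' (h : IsSuperSubalgebra G0 G1) {a z : A} (ha : a ∈ G0) (hz : z ∈ G1) :
    z * a - a * z ∈ G1 := by
  simpa using G1.neg_mem (h.commutator_mem_odd a ha z hz)

lemma mul_self_mem (h : IsSuperSubalgebra G0 G1) (h2 : (2 : F) ≠ 0) {z : A} (hz : z ∈ G1) :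
    z * z ∈ G0 := by
  have := G0.smul_mem (2 : F)⁻¹ (h.anticommutator_mem z hz z hz)
  rwa [← two_smul F, smul_smul, inv_mul_cancel₀ h2, one_smul] at this

lemma isNilpotent_of_mem_odd (h : IsSuperSubalgebra G0 G1) (h2 : (2 : F) ≠ 0)
    (hnil : ∀ a ∈ G0, IsNilpotent a) {z : A} (hz : z ∈ G1) : IsNilpotent z := by
  obtain ⟨k, hk⟩ := hnil _ (h.mul_self_mem h2 hz)
  exact ⟨2 * k, by rw [pow_mul, sq, hk]⟩

lemma sup_span_singleton (h : IsSuperSubalgebra G0 G1) {a b : A}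
    (ha0 : ∀ x ∈ G0, x * a - a * x ∈ G0) (hb0 : ∀ x ∈ G0, x * b - b * x ∈ G1)
    (ha1 : ∀ z ∈ G1, a * z - z * a ∈ G1) (hab : a * b - b * a ∈ G1)
    (hb1 : ∀ z ∈ G1, z * b + b * z ∈ G0) (hbb : b * b + b * b ∈ G0 ⊔ F ∙ a) :
    IsSuperSubalgebra (G0 ⊔ F ∙ a) (G1 ⊔ F ∙ b) := by
  constructor
  · intro x hx y hy
    obtain ⟨x, hxG, r, rfl⟩ := Submodule.mem_sup_span_singleton.1 hx
    obtain ⟨y, hyG, s, rfl⟩ := Submodule.mem_sup_span_singleton.1 hy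
    have e : (x + r • a) * (y + s • a) - (y + s • a) * (x + r • a) =
        (x * y - y * x) + s • (x * a - a * x) - r • (y * a - a * y) := by
      simp only [add_mul, mul_add, smul_mul_assoc, mul_smul_comm]
      module
    rw [e]
    refine Submodule.sub_mem _ (Submodule.add_mem _ ?_ ?_) ?_ <;> apply Submodule.mem_sup_left
    exacts [h.commutator_mem x hxG y hyG, G0.smul_mem _ (ha0 x hxG), G0.smul_mem _ (ha0 y hyG)]
  · intro x hx z hz
    obtain ⟨x, hxG, r, rfl⟩ := Submodule.mem_sup_span_singleton.1 hx
    obtain ⟨z, hzG, s, rfl⟩ := Submodule.mem_sup_span_singleton.1 hz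
    have e : (x + r • a) * (z + s • b) - (z + s • b) * (x + r • a) =
        (x * z - z * x) + s • (x * b - b * x) + r • (a * z - z * a) +
          (r * s) • (a * b - b * a) := by
      simp only [add_mul, mul_add, smul_mul_assoc, mul_smul_comm]
      module
    rw [e]
    refine Submodule.add_mem _ (Submodule.add_mem _ (Submodule.add_mem _ ?_ ?_) ?_) ?_ <;>
      apply Submodule.mem_sup_left
    exacts [h.commutator_mem_odd x hxG z hzG, G1.smul_mem _ (hb0 x hxG), G1.smul_mem _ (ha1 z hzG),
      G1.smul_mem _ hab]
  · intro z hz w hw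
    obtain ⟨z, hzG, r, rfl⟩ := Submodule.mem_sup_span_singleton.1 hz
    obtain ⟨w, hwG, s, rfl⟩ := Submodule.mem_sup_span_singleton.1 hw
    have e : (z + r • b) * (w + s • b) + (w + s • b) * (z + r • b) =
        (z * w + w * z) + s • (z * b + b * z) + r • (w * b + b * w) +
          (r * s) • (b * b + b * b) := by
      simp only [add_mul, mul_add, smul_mul_assoc, mul_smul_comm]
      module
    rw [e]
    refine Submodule.add_mem _ (Submodule.add_mem _ (Submodule.add_mem _ ?_ ?_) ?_)
      (Submodule.smul_mem _ _ hbb) <;> apply Submodule.mem_sup_left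
    exacts [h.anticommutator_mem z hzG w hwG, G0.smul_mem _ (hb1 z hzG), G0.smul_mem _ (hb1 w hwG)]

lemma sup_span_singleton_even (h : IsSuperSubalgebra G0 G1) {x : A}
    (h0 : ∀ a ∈ G0, a * x - x * a ∈ G0) (h1 : ∀ z ∈ G1, x * z - z * x ∈ G1) :
    IsSuperSubalgebra (G0 ⊔ F ∙ x) G1 := by
  simpa using h.sup_span_singleton (b := 0) h0 (by simp) h1 (by simp) (by simp) (by simp)

lemma sup_span_singleton_odd (h : IsSuperSubalgebra G0 G1) {x : A}
    (h0 : ∀ a ∈ G0, a * x - x * a ∈ G1) (h1 : ∀ z ∈ G1, z * x + x * z ∈ G0) :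
    IsSuperSubalgebra (G0 ⊔ F ∙ (x * x)) (G1 ⊔ F ∙ x) := by
  refine h.sup_span_singleton (fun a ha => ?_) h0 (fun z hz => ?_) (by simp [mul_assoc]) h1 ?_
  · have e : a * (x * x) - x * x * a = (a * x - x * a) * x + x * (a * x - x * a) := by
      noncomm_ring
    exact e ▸ h1 _ (h0 a ha)
  · have e : x * x * z - z * (x * x) = -((z * x + x * z) * x - x * (z * x + x * z)) := by
      noncomm_ring
    exact e ▸ G1.neg_mem (h0 _ (h1 z hz))
  · rw [← two_smul F]
    exact Submodule.mem_sup_right (Submodule.smul_mem _ _ (Submodule.mem_span_singleton_self _))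

end IsSuperSubalgebra

end SuperSubalgebra

section Subquotient

variable {F V : Type*} [Field F] [AddCommGroup V] [Module F V]

namespace Submodule

def pairStabilizer (W N : Submodule F V) : Subalgebra F (End F V) where
  carrier := {f | W ≤ W.comap f ∧ N ≤ N.comap f}
  mul_mem' hf hg := ⟨fun _ hv => hf.1 (hg.1 hv), fun _ hv => hf.2 (hg.2 hv)⟩
  add_mem' hf hg := ⟨fun _ hv => W.add_mem (hf.1 hv) (hg.1 hv),
    fun _ hv => N.add_mem (hf.2 hv) (hg.2 hv)⟩
  algebraMap_mem' c := ⟨fun _ hv => W.smul_mem c hv, fun _ hv => N.smul_mem c hv⟩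

def subquotientAction (W N : Submodule F V) :
    W.pairStabilizer N →ₐ[F] End F (W ⧸ N.comap W.subtype) where
  toFun f := (N.comap W.subtype).mapQ _ (f.1.restrict f.2.1) fun _ hv => f.2.2 hv
  map_one' := by ext; rfl
  map_mul' _ _ := by ext; rfl
  map_zero' := by ext; rfl
  map_add' _ _ := by ext; rfl
  commutes' _ := by ext; rfl

def relKernel (X : Set (End F V)) (W N : Submodule F V) : Submodule F V :=
  W ⊓ ⨅ s ∈ X, N.comap s

variable {W N : Submodule F V}

lemma subquotientAction_mk (f : W.pairStabilizer N) (v : W) :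
    W.subquotientAction N f (Quotient.mk v) = Quotient.mk ⟨f.1 v, f.2.1 v.2⟩ := rfl

lemma subquotientAction_eq_zero_iff (f : W.pairStabilizer N) :
    W.subquotientAction N f = 0 ↔ (f : End F V) ∈ W.compatibleMaps N := by
  constructor
  · intro h v hv
    have := congr($h (Quotient.mk ⟨v, hv⟩))
    rwa [subquotientAction_mk, LinearMap.zero_apply, Quotient.mk_eq_zero] at this
  · intro h
    ext v
    simpa [subquotientAction_mk, Quotient.mk_eq_zero] using h v.2

lemma pow_map_val_le_compatibleMaps {G : Submodule F (W.pairStabilizer N)} {n : ℕ}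
    (h : G.map (W.subquotientAction N).toLinearMap ^ n = ⊥) :
    G.map (W.pairStabilizer N).val.toLinearMap ^ n ≤ W.compatibleMaps N := by
  rw [← Submodule.map_pow]
  rintro _ ⟨f, hf, rfl⟩
  have hf' : W.subquotientAction N f ∈ G.map (W.subquotientAction N).toLinearMap ^ n := by
    rw [← Submodule.map_pow]
    exact ⟨f, hf, rfl⟩
  rw [h, Submodule.mem_bot] at hf'
  exact (subquotientAction_eq_zero_iff f).1 hf'

lemma compatibleMaps_mul_le (P Q R : Submodule F V) :
    Q.compatibleMaps R * P.compatibleMaps Q ≤ P.compatibleMaps R :=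
  Submodule.mul_le.2 fun _ hf _ hg _ hv => hf (hg hv)

lemma pow_add_le_compatibleMaps {E : Submodule F (End F V)} {P Q R : Submodule F V}
    {a b : ℕ} (ha : E ^ a ≤ Q.compatibleMaps R) (hb : E ^ b ≤ P.compatibleMaps Q) :
    E ^ (a + b) ≤ P.compatibleMaps R := by
  rw [pow_add]
  exact (mul_le_mul' ha hb).trans (compatibleMaps_mul_le P Q R)

lemma compatibleMaps_top_bot : (⊤ : Submodule F V).compatibleMaps (⊥ : Submodule F V) = ⊥ := by
  ext f
  simp only [Submodule.mem_bot]
  constructor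
  · intro h
    ext v
    simpa using h (Submodule.mem_top (x := v))
  · rintro rfl v _
    simp

lemma mem_relKernel {X : Set (End F V)} {v : V} :
    v ∈ relKernel X W N ↔ v ∈ W ∧ ∀ s ∈ X, s v ∈ N := by
  simp [relKernel, Submodule.mem_iInf]

lemma le_relKernel {X : Set (End F V)} (hNW : N ≤ W) (hX : ∀ s ∈ X, s ∈ W.pairStabilizer N) :
    N ≤ relKernel X W N :=
  fun _ hv => mem_relKernel.2 ⟨hNW hv, fun s hs => (hX s hs).2 hv⟩

lemma relKernel_le_comap {X : Set (End F V)} {c : End F V} (hc : c ∈ W.pairStabilizer N)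
    (hX : ∀ s ∈ X, ∃ t ∈ X, s * c = c * s + t ∨ s * c = -(c * s) + t) :
    relKernel X W N ≤ (relKernel X W N).comap c := by
  intro v hv
  obtain ⟨hvW, hvX⟩ := mem_relKernel.1 hv
  refine mem_relKernel.2 ⟨hc.1 hvW, fun s hs => ?_⟩
  obtain ⟨t, ht, h | h⟩ := hX s hs
  · have : s (c v) = c (s v) + t v := congr($h v)
    exact this ▸ N.add_mem (hc.2 (hvX s hs)) (hvX t ht)
  · have : s (c v) = -c (s v) + t v := congr($h v)
    exact this ▸ N.add_mem (N.neg_mem (hc.2 (hvX s hs))) (hvX t ht)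

lemma finrank_map_lt {M : Type*} [AddCommGroup M] [Module F M] {p : Submodule F V}
    [FiniteDimensional F p] (f : V →ₗ[F] M) {x : V} (hx : x ∈ p) (hx0 : x ≠ 0) (hfx : f x = 0) :
    finrank F (p.map f) < finrank F p := by
  have hker : 0 < finrank F (LinearMap.ker (f.domRestrict p)) :=
    Module.finrank_pos_iff_exists_ne_zero.2 ⟨⟨⟨x, hx⟩, hfx⟩, fun h => hx0 congr(($h).1.1)⟩
  rw [← LinearMap.range_domRestrict, ← LinearMap.finrank_range_add_finrank_ker (f.domRestrict p)]
  omega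

end Submodule

namespace Module.End

variable {W N : Submodule F V}

lemma exists_mem_notMem_apply_mem {f : End F V} (hf : IsNilpotent f) (hNW : N < W)
    (hW : W ≤ W.comap f) : ∃ w ∈ W, w ∉ N ∧ f w ∈ N := by
  classical
  obtain ⟨n, hn⟩ := hf
  have hex : ∃ k, ∀ w ∈ W, (f ^ k) w ∈ N := ⟨n, fun w _ => by simp [hn]⟩
  have hk : Nat.find hex ≠ 0 := by
    intro h0
    obtain ⟨w, hw, hwN⟩ := SetLike.exists_of_lt hNW
    exact hwN (by simpa [h0] using Nat.find_spec hex w hw)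
  obtain ⟨w, hw, hwN⟩ : ∃ w ∈ W, (f ^ (Nat.find hex - 1)) w ∉ N := by
    simpa using Nat.find_min hex (Nat.sub_one_lt hk)
  refine ⟨_, pow_apply_mem_of_forall_mem (p := W) _ (fun v hv => hW hv) w hw, hwN, ?_⟩
  rw [← mul_apply, ← pow_succ', Nat.sub_add_cancel (Nat.one_le_iff_ne_zero.2 hk)]
  exact Nat.find_spec hex w hw

lemma range_pow_le_comap {s c : End F V} (h : s * c = c * s ∨ s * c = -(c * s)) (j : ℕ) :
    LinearMap.range (c ^ j) ≤ (LinearMap.range (c ^ j)).comap s := by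
  obtain ⟨y, hy, hyc⟩ : ∃ y, s * c ^ j = y * s ∧ LinearMap.range y = LinearMap.range (c ^ j) := by
    rcases h with h | h
    · exact ⟨c ^ j, SemiconjBy.pow_right h j, rfl⟩
    · refine ⟨(-c) ^ j, SemiconjBy.pow_right (y := -c) (by rw [SemiconjBy, h, neg_mul]) j, ?_⟩
      rcases neg_one_pow_eq_or (End F V) j with e | e <;> simp [neg_pow, e]
  rintro _ ⟨v, rfl⟩
  rw [Submodule.mem_comap, ← mul_apply, hy, mul_apply, ← hyc]
  exact LinearMap.mem_range_self _ _

end Module.End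

end Subquotient

section AdjointPair

variable {F A : Type*} [Field F] [Ring A] [Algebra F A]

-- `A × A` holds the even and the odd component of the adjoint module; `oddAd` swaps them.
def evenAd : A →ₗ[F] End F (A × A) :=
  LinearMap.mk₂ F (fun a x => (a * x.1 - x.1 * a, a * x.2 - x.2 * a))
    (fun _ _ _ => by ext <;> dsimp only [Prod.fst_add, Prod.snd_add] <;> noncomm_ring)
    (fun _ _ _ => by
      ext <;> dsimp only [Prod.smul_fst, Prod.smul_snd] <;>
        rw [smul_sub, smul_mul_assoc, mul_smul_comm])
    (fun _ _ _ => by ext <;> dsimp only [Prod.fst_add, Prod.snd_add] <;> noncomm_ring)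
    (fun _ _ _ => by
      ext <;> dsimp only [Prod.smul_fst, Prod.smul_snd] <;>
        rw [smul_sub, smul_mul_assoc, mul_smul_comm])

def oddAd : A →ₗ[F] End F (A × A) :=
  LinearMap.mk₂ F (fun z x => (z * x.2 + x.2 * z, z * x.1 - x.1 * z))
    (fun _ _ _ => by ext <;> dsimp only [Prod.fst_add, Prod.snd_add] <;> noncomm_ring)
    (fun _ _ _ => by
      ext <;> dsimp only [Prod.smul_fst, Prod.smul_snd] <;>
        rw [smul_mul_assoc, mul_smul_comm] <;> simp only [smul_add, smul_sub])
    (fun _ _ _ => by ext <;> dsimp only [Prod.fst_add, Prod.snd_add] <;> noncomm_ring)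
    (fun _ _ _ => by
      ext <;> dsimp only [Prod.smul_fst, Prod.smul_snd] <;>
        rw [smul_mul_assoc, mul_smul_comm] <;> simp only [smul_add, smul_sub])

@[simp] lemma evenAd_apply (a : A) (x : A × A) :
    evenAd (F := F) a x = (a * x.1 - x.1 * a, a * x.2 - x.2 * a) := rfl

@[simp] lemma oddAd_apply (z : A) (x : A × A) :
    oddAd (F := F) z x = (z * x.2 + x.2 * z, z * x.1 - x.1 * z) := rfl

lemma evenAd_commutator (a b : A) :
    evenAd (F := F) (a * b - b * a) = evenAd a * evenAd b - evenAd b * evenAd a := by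
  refine LinearMap.ext fun x => Prod.ext ?_ ?_ <;>
    simp only [evenAd_apply, LinearMap.sub_apply, Module.End.mul_apply, Prod.fst_sub,
      Prod.snd_sub] <;> noncomm_ring

lemma oddAd_commutator (a z : A) :
    oddAd (F := F) (a * z - z * a) = evenAd a * oddAd z - oddAd z * evenAd a := by
  refine LinearMap.ext fun x => Prod.ext ?_ ?_ <;>
    simp only [evenAd_apply, oddAd_apply, LinearMap.sub_apply, Module.End.mul_apply,
      Prod.fst_sub, Prod.snd_sub] <;> noncomm_ring

lemma evenAd_anticommutator (z w : A) :
    evenAd (F := F) (z * w + w * z) = oddAd z * oddAd w + oddAd w * oddAd z := by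
  refine LinearMap.ext fun x => Prod.ext ?_ ?_ <;>
    simp only [evenAd_apply, oddAd_apply, LinearMap.add_apply, Module.End.mul_apply,
      Prod.fst_add, Prod.snd_add] <;> noncomm_ring

lemma isNilpotent_evenAd {a : A} (h : IsNilpotent a) : IsNilpotent (evenAd (F := F) a) := by
  set d := LinearMap.mulLeft F a - LinearMap.mulRight F a
  have hd : IsNilpotent d := (LinearMap.commute_mulLeft_right a a).isNilpotent_sub
    ((LinearMap.isNilpotent_mulLeft_iff F a).2 h) ((LinearMap.isNilpotent_mulRight_iff F a).2 h)
  have : evenAd (F := F) a = LinearMap.prodMapAlgHom F A A (d, d) := by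
    ext x <;> simp [d]
  obtain ⟨n, hn⟩ := hd
  exact ⟨n, by rw [this, ← map_pow, Prod.pow_mk, hn, Prod.mk_zero_zero, map_zero]⟩

namespace IsSuperSubalgebra

variable {G0 G1 : Submodule F A}

lemma adjoint (h : IsSuperSubalgebra G0 G1) :
    IsSuperSubalgebra (G0.map (evenAd (F := F))) (G1.map oddAd) where
  commutator_mem := by
    rintro _ ⟨a, ha, rfl⟩ _ ⟨b, hb, rfl⟩
    exact ⟨_, h.commutator_mem a ha b hb, evenAd_commutator a b⟩
  commutator_mem_odd := by
    rintro _ ⟨a, ha, rfl⟩ _ ⟨z, hz, rfl⟩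
    exact ⟨_, h.commutator_mem_odd a ha z hz, oddAd_commutator a z⟩
  anticommutator_mem := by
    rintro _ ⟨z, hz, rfl⟩ _ ⟨w, hw, rfl⟩
    exact ⟨_, h.anticommutator_mem z hz w hw, evenAd_anticommutator z w⟩

lemma prod_le_comap_adjoint {H0 H1 : Submodule F A} (hG : IsSuperSubalgebra G0 G1) (h0 : H0 ≤ G0)
    (h1 : H1 ≤ G1) :
    ∀ s ∈ (H0.map (evenAd (F := F)) : Set (End F (A × A))) ∪ H1.map oddAd,
      G0.prod G1 ≤ (G0.prod G1).comap s := by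
  rintro _ (⟨a, ha, rfl⟩ | ⟨z, hz, rfl⟩) x ⟨hx, hy⟩
  · exact ⟨hG.commutator_mem a (h0 ha) _ hx, hG.commutator_mem_odd a (h0 ha) _ hy⟩
  · exact ⟨hG.anticommutator_mem z (h1 hz) _ hy, hG.commutator_mem_odd' hx (h1 hz)⟩

end IsSuperSubalgebra

end AdjointPair

namespace IsSuperSubalgebra

variable {F A : Type*} [Field F] [Ring A] [Algebra F A]

lemma exists_maximal {G0 G1 : Submodule F A} [FiniteDimensional F G0] [FiniteDimensional F G1]
    (hne : ¬(G0 = ⊥ ∧ G1 = ⊥)) :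
    ∃ H0 H1 : Submodule F A, H0 ≤ G0 ∧ H1 ≤ G1 ∧ IsSuperSubalgebra H0 H1 ∧
      ¬(G0 ≤ H0 ∧ G1 ≤ H1) ∧ finrank F H0 + finrank F H1 < finrank F G0 + finrank F G1 ∧
      ∀ K0 K1 : Submodule F A, IsSuperSubalgebra K0 K1 → H0 ≤ K0 → H1 ≤ K1 → K0 ≤ G0 →
        K1 ≤ G1 → H0 < K0 ∨ H1 < K1 → G0 ≤ K0 ∧ G1 ≤ K1 := by
  set P : Submodule F A × Submodule F A → Prop := fun H =>
    H.1 ≤ G0 ∧ H.2 ≤ G1 ∧ IsSuperSubalgebra H.1 H.2 ∧ ¬(G0 ≤ H.1 ∧ G1 ≤ H.2)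
  set dim : Submodule F A × Submodule F A → ℕ := fun H => finrank F H.1 + finrank F H.2
  have hlt : ∀ H, P H → dim H < finrank F G0 + finrank F G1 := by
    rintro H ⟨h0, h1, -, hHG⟩
    have := Submodule.finrank_mono h0
    have := Submodule.finrank_mono h1
    rcases not_and_or.1 hHG with h | h
    · have := Submodule.finrank_lt_finrank_of_lt (lt_of_le_not_ge h0 h)
      simp only [dim]
      omega
    · have := Submodule.finrank_lt_finrank_of_lt (lt_of_le_not_ge h1 h)
      simp only [dim]
      omega
  obtain ⟨_, ⟨⟨H0, H1⟩, hP, rfl⟩, hmax⟩ := BddAbove.exists_isGreatest_of_nonempty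
    (S := dim '' {H | P H}) ⟨_, by rintro _ ⟨H, hH, rfl⟩; exact (hlt H hH).le⟩
    ⟨_, (⊥, ⊥), ⟨bot_le, bot_le, bot, fun h => hne ⟨le_bot_iff.1 h.1, le_bot_iff.1 h.2⟩⟩, rfl⟩
  refine ⟨H0, H1, hP.1, hP.2.1, hP.2.2.1, hP.2.2.2, hlt _ hP,
    fun K0 K1 hK hHK0 hHK1 hKG0 hKG1 hHK => ?_⟩
  by_contra hKG
  have hle : dim (K0, K1) ≤ dim (H0, H1) := hmax ⟨(K0, K1), ⟨hKG0, hKG1, hK, hKG⟩, rfl⟩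
  have := Submodule.finiteDimensional_of_le hKG0
  have := Submodule.finiteDimensional_of_le hKG1
  have := Submodule.finrank_mono hHK0
  have := Submodule.finrank_mono hHK1
  rcases hHK with h | h
  · have := Submodule.finrank_lt_finrank_of_lt h
    simp only [dim] at hle
    omega
  · have := Submodule.finrank_lt_finrank_of_lt h
    simp only [dim] at hle
    omega

/-- If `(x₀, x₁) ∈ G \ H` normalises a maximal `H`, then `G` is generated by `H` and the component
`c` of `x` outside `H`: it is `H + F c`, plus `F c²` when `c = x₁` is odd. -/
lemma exists_normalizing_of_maximal (h2 : (2 : F) ≠ 0) {G0 G1 H0 H1 : Submodule F A}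
    (hG : IsSuperSubalgebra G0 G1) (hnil : ∀ a ∈ G0, IsNilpotent a)
    (hH : IsSuperSubalgebra H0 H1) (hH0 : H0 ≤ G0) (hH1 : H1 ≤ G1)
    (hmax : ∀ K0 K1 : Submodule F A, IsSuperSubalgebra K0 K1 → H0 ≤ K0 → H1 ≤ K1 → K0 ≤ G0 →
      K1 ≤ G1 → H0 < K0 ∨ H1 < K1 → G0 ≤ K0 ∧ G1 ≤ K1)
    {x0 x1 : A} (hx0G : x0 ∈ G0) (hx1G : x1 ∈ G1) (hxH : ¬(x0 ∈ H0 ∧ x1 ∈ H1))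
    (hx0 : ∀ h ∈ H0, h * x0 - x0 * h ∈ H0 ∧ h * x1 - x1 * h ∈ H1)
    (hx1 : ∀ z ∈ H1, z * x1 + x1 * z ∈ H0 ∧ z * x0 - x0 * z ∈ H1) :
    ∃ c ∈ (G0 : Set A) ∪ G1, IsNilpotent c ∧
      (∀ s ∈ (H0 : Set A) ∪ H1, ∃ t ∈ (H0 : Set A) ∪ H1,
        s * c = c * s + t ∨ s * c = -(c * s) + t) ∧
      G0 ⊔ G1 ≤ H0 ⊔ H1 ⊔ Submodule.span F {c, c * c} := by
  have hspan (c : A) : F ∙ c ≤ H0 ⊔ H1 ⊔ Submodule.span F {c, c * c} ∧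
      F ∙ (c * c) ≤ H0 ⊔ H1 ⊔ Submodule.span F {c, c * c} :=
    ⟨le_sup_of_le_right (Submodule.span_mono (by simp)),
      le_sup_of_le_right (Submodule.span_mono (by simp))⟩
  have hlt {H : Submodule F A} {y : A} (hy : y ∉ H) : H < H ⊔ F ∙ y :=
    left_lt_sup.2 fun h => hy ((Submodule.span_singleton_le_iff_mem _ _).1 h)
  by_cases hx0H : x0 ∈ H0
  · have hx1H : x1 ∉ H1 := fun h => hxH ⟨hx0H, h⟩
    obtain ⟨hG0, hG1⟩ := hmax _ _
      (hH.sup_span_singleton_odd (fun h hh => (hx0 h hh).2) (fun z hz => (hx1 z hz).1))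
      le_sup_left le_sup_left
      (sup_le hH0 ((Submodule.span_singleton_le_iff_mem _ _).2 (hG.mul_self_mem h2 hx1G)))
      (sup_le hH1 ((Submodule.span_singleton_le_iff_mem _ _).2 hx1G)) (Or.inr (hlt hx1H))
    refine ⟨x1, Or.inr hx1G, hG.isNilpotent_of_mem_odd h2 hnil hx1G, ?_, sup_le
      (hG0.trans (sup_le (le_sup_left.trans le_sup_left) (hspan x1).2))
      (hG1.trans (sup_le (le_sup_right.trans le_sup_left) (hspan x1).1))⟩
    rintro s (hs | hs)
    · exact ⟨_, Or.inr (hx0 s hs).2, Or.inl (by abel)⟩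
    · exact ⟨_, Or.inl (hx1 s hs).1, Or.inr (by abel)⟩
  · obtain ⟨hG0, hG1⟩ := hmax _ _ (hH.sup_span_singleton_even (fun h hh => (hx0 h hh).1)
        (fun z hz => by simpa using H1.neg_mem (hx1 z hz).2))
      le_sup_left le_rfl (sup_le hH0 ((Submodule.span_singleton_le_iff_mem _ _).2 hx0G)) hH1
      (Or.inl (hlt hx0H))
    refine ⟨x0, Or.inl hx0G, hnil _ hx0G, ?_, sup_le
      (hG0.trans (sup_le (le_sup_left.trans le_sup_left) (hspan x0).1))
      (hG1.trans (le_sup_right.trans le_sup_left))⟩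
    rintro s (hs | hs)
    · exact ⟨_, Or.inl (hx0 s hs).1, Or.inl (by abel)⟩
    · exact ⟨_, Or.inr (hx1 s hs).2, Or.inl (by abel)⟩

theorem lt_relKernel (h2 : (2 : F) ≠ 0) {V : Type u} [AddCommGroup V] [Module F V]
    {G0 G1 : Submodule F (End F V)} [FiniteDimensional F G0] [FiniteDimensional F G1]
    (hG : IsSuperSubalgebra G0 G1) (hnil : ∀ a ∈ G0, IsNilpotent a) {W N : Submodule F V}
    (hNW : N < W) (hstab : ∀ s ∈ (G0 : Set (End F V)) ∪ G1, s ∈ W.pairStabilizer N) :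
    N < Submodule.relKernel (G0 ∪ G1) W N := by
  induction hd : finrank F G0 + finrank F G1 using Nat.strong_induction_on
    generalizing V G0 G1 W N with
  | _ d ih =>
  by_cases hbot : G0 = ⊥ ∧ G1 = ⊥
  · refine hNW.trans_le fun v hv => Submodule.mem_relKernel.2 ⟨hv, ?_⟩
    rw [hbot.1, hbot.2]
    rintro s (hs | hs) <;> simp [(Submodule.mem_bot F).1 hs]
  obtain ⟨H0, H1, hH0, hH1, hH, hHG, hdim, hmax⟩ := exists_maximal hbot
  have := Submodule.finiteDimensional_of_le hH0
  have := Submodule.finiteDimensional_of_le hH1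
  have hHstab : ∀ s ∈ (H0 : Set (End F V)) ∪ H1, s ∈ W.pairStabilizer N :=
    fun s hs => hstab s (hs.imp (@hH0 s) (@hH1 s))
  -- the adjoint action of `H` on `(G0 × G1) / (H0 × H1)` has a nonzero invariant vector
  obtain ⟨x, hx, hxH⟩ := SetLike.exists_of_lt <| ih _
    ((add_le_add (Submodule.finrank_map_le _ _) (Submodule.finrank_map_le _ _)).trans_lt
      (hd ▸ hdim))
    hH.adjoint (by rintro _ ⟨a, ha, rfl⟩; exact isNilpotent_evenAd (hnil a (hH0 ha)))
    (lt_of_le_not_ge (Submodule.prod_mono hH0 hH1) fun h =>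
      hHG ⟨fun a ha => (h (x := (a, 0)) ⟨ha, zero_mem _⟩).1,
        fun z hz => (h (x := (0, z)) ⟨zero_mem _, hz⟩).2⟩)
    (fun s hs => ⟨hG.prod_le_comap_adjoint hH0 hH1 s hs,
      hH.prod_le_comap_adjoint le_rfl le_rfl s hs⟩)
    rfl
  obtain ⟨⟨hx0G, hx1G⟩, hxad⟩ := Submodule.mem_relKernel.1 hx
  obtain ⟨c, hcG, hcnil, hcH, hGc⟩ := exists_normalizing_of_maximal h2 hG hnil hH hH0 hH1 hmax
    hx0G hx1G hxH (fun h hh => by simpa using hxad _ (Or.inl ⟨h, hh, rfl⟩))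
    (fun z hz => by simpa using hxad _ (Or.inr ⟨z, hz, rfl⟩))
  obtain ⟨w, hw, hwN, hcw⟩ := Module.End.exists_mem_notMem_apply_mem hcnil
    (ih _ (hd ▸ hdim) hH (fun a ha => hnil a (hH0 ha)) hNW hHstab rfl)
    (Submodule.relKernel_le_comap (hstab c hcG) hcH)
  obtain ⟨hwW, hwH⟩ := Submodule.mem_relKernel.1 hw
  have hkill : G0 ⊔ G1 ≤ N.comap (LinearMap.applyₗ w) := by
    refine hGc.trans (sup_le (sup_le (fun s hs => hwH s (Or.inl hs))
      (fun s hs => hwH s (Or.inr hs))) (Submodule.span_le.2 ?_))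
    rintro _ (rfl | rfl)
    exacts [hcw, (hstab c hcG).2 hcw]
  exact SetLike.lt_iff_le_and_exists.2 ⟨Submodule.le_relKernel hNW.le hstab, w,
    Submodule.mem_relKernel.2 ⟨hwW, fun s hs =>
      hkill (hs.elim (Submodule.mem_sup_left ·) (Submodule.mem_sup_right ·))⟩, hwN⟩

variable {V : Type u} [AddCommGroup V] [Module F V] {G0 G1 : Submodule F (End F V)}

lemma exists_superCentral (h2 : (2 : F) ≠ 0) [FiniteDimensional F G0] [FiniteDimensional F G1]
    (hG : IsSuperSubalgebra G0 G1) (hnil : ∀ a ∈ G0, IsNilpotent a) (hne : ¬(G0 = ⊥ ∧ G1 = ⊥)) :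
    ∃ c ∈ G0 ⊔ G1, c ≠ 0 ∧ IsNilpotent c ∧
      ∀ s ∈ (G0 : Set (End F V)) ∪ G1, s * c = c * s ∨ s * c = -(c * s) := by
  obtain ⟨x, hx, hx0⟩ := SetLike.exists_of_lt <| hG.adjoint.lt_relKernel h2
    (by rintro _ ⟨a, ha, rfl⟩; exact isNilpotent_evenAd (hnil a ha))
    (bot_lt_iff_ne_bot.2 fun h => hne ((Submodule.prod_eq_bot_iff _ _ _).1 h))
    (fun s hs => ⟨hG.prod_le_comap_adjoint le_rfl le_rfl s hs,
      fun v hv => by simp [(Submodule.mem_bot F).1 hv]⟩)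
  obtain ⟨⟨hxG0, hxG1⟩, hxad⟩ := Submodule.mem_relKernel.1 hx
  have h0 : ∀ a ∈ G0, a * x.1 - x.1 * a = 0 ∧ a * x.2 - x.2 * a = 0 := fun a ha => by
    simpa [Prod.ext_iff] using hxad _ (Or.inl ⟨a, ha, rfl⟩)
  have h1 : ∀ z ∈ G1, z * x.2 + x.2 * z = 0 ∧ z * x.1 - x.1 * z = 0 := fun z hz => by
    simpa [Prod.ext_iff] using hxad _ (Or.inr ⟨z, hz, rfl⟩)
  by_cases hx1 : x.1 = 0
  · have hx2 : x.2 ≠ 0 := fun h => hx0 (by simp [Prod.ext_iff, hx1, h])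
    have hsq : x.2 * x.2 = 0 := by
      have := (h1 _ hxG1).1
      rwa [← two_smul F, smul_eq_zero, or_iff_right h2] at this
    refine ⟨x.2, Submodule.mem_sup_right hxG1, hx2, ⟨2, by rw [sq, hsq]⟩, ?_⟩
    rintro s (hs | hs)
    · exact Or.inl (sub_eq_zero.1 (h0 s hs).2)
    · exact Or.inr (eq_neg_of_add_eq_zero_left (h1 s hs).1)
  · refine ⟨x.1, Submodule.mem_sup_left hxG0, hx1, hnil _ hxG0, ?_⟩
    rintro s (hs | hs)
    · exact Or.inl (sub_eq_zero.1 (h0 s hs).1)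
    · exact Or.inl (sub_eq_zero.1 (h1 s hs).2)

lemma exists_subquotient [FiniteDimensional F G0] [FiniteDimensional F G1]
    (hG : IsSuperSubalgebra G0 G1) (hnil : ∀ a ∈ G0, IsNilpotent a) {W N : Submodule F V}
    (hS : ∀ s ∈ (G0 : Set (End F V)) ∪ G1, s ∈ W.pairStabilizer N) {c : End F V}
    (hcG : c ∈ G0 ⊔ G1) (hc0 : c ≠ 0) (hc : c ∈ W.compatibleMaps N) :
    ∃ G0' G1' : Submodule F (End F (W ⧸ N.comap W.subtype)),
      FiniteDimensional F G0' ∧ FiniteDimensional F G1' ∧ IsSuperSubalgebra G0' G1' ∧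
      (∀ a ∈ G0', IsNilpotent a) ∧ finrank F ↥(G0' ⊔ G1') < finrank F ↥(G0 ⊔ G1) ∧
      ∀ n, (G0' ⊔ G1') ^ n = ⊥ → (G0 ⊔ G1) ^ n ≤ W.compatibleMaps N := by
  set S := W.pairStabilizer N
  set φ := W.subquotientAction N
  set E := G0.comap S.val.toLinearMap ⊔ G1.comap S.val.toLinearMap
  have hE : E.map S.val.toLinearMap = G0 ⊔ G1 := by
    rw [Submodule.map_sup, Submodule.map_comap_eq_of_le, Submodule.map_comap_eq_of_le]
    exacts [fun s hs => ⟨⟨s, hS s (Or.inr hs)⟩, rfl⟩, fun s hs => ⟨⟨s, hS s (Or.inl hs)⟩, rfl⟩]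
  have eE := Submodule.equivMapOfInjective S.val.toLinearMap Subtype.val_injective E
  have : FiniteDimensional F E := by
    rw [hE] at eE
    exact LinearEquiv.finiteDimensional eE.symm
  have hEφ : E.map φ.toLinearMap = (G0.comap S.val.toLinearMap).map φ.toLinearMap ⊔
      (G1.comap S.val.toLinearMap).map φ.toLinearMap :=
    Submodule.map_sup _ _ _
  refine ⟨_, _, Submodule.finiteDimensional_of_le (hEφ ▸ le_sup_left),
    Submodule.finiteDimensional_of_le (hEφ ▸ le_sup_right), (hG.comap S.val).map φ, ?_, hEφ ▸ ?_,
    fun n hn => hE ▸ Submodule.pow_map_val_le_compatibleMaps (hEφ ▸ hn)⟩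
  · rintro _ ⟨g, hg, rfl⟩
    obtain ⟨k, hk⟩ := hnil _ hg
    exact (IsNilpotent.map ⟨k, Subtype.ext (by simpa using hk)⟩ φ : IsNilpotent (φ g))
  · obtain ⟨e, he, hec⟩ : c ∈ E.map S.val.toLinearMap := hE ▸ hcG
    exact hE ▸ (LinearEquiv.finrank_eq eE) ▸ Submodule.finrank_map_lt _ he
      (fun h => hc0 (by rw [← hec, h, map_zero]))
      ((Submodule.subquotientAction_eq_zero_iff e).2 (by rwa [show (e : End F V) = c from hec]))

theorem exists_sup_pow_eq_bot (h2 : (2 : F) ≠ 0) [FiniteDimensional F G0]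
    [FiniteDimensional F G1] (hG : IsSuperSubalgebra G0 G1) (hnil : ∀ a ∈ G0, IsNilpotent a) :
    ∃ n, (G0 ⊔ G1) ^ n = ⊥ := by
  induction hd : finrank F ↥(G0 ⊔ G1) using Nat.strong_induction_on generalizing V G0 G1 with
  | _ d ih =>
  by_cases hbot : G0 = ⊥ ∧ G1 = ⊥
  · exact ⟨1, by rw [pow_one, hbot.1, hbot.2, sup_bot_eq]⟩
  obtain ⟨c, hcG, hc0, ⟨q, hq⟩, hcomm⟩ := hG.exists_superCentral h2 hnil hbot
  -- `G` preserves the flag of the `range (c ^ i)`, and `c` acts on each layer by zero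
  have hlayer : ∀ i, ∃ n, (G0 ⊔ G1) ^ n ≤
      (LinearMap.range (c ^ i)).compatibleMaps (LinearMap.range (c ^ (i + 1))) := by
    intro i
    obtain ⟨G0', G1', _, _, hG', hnil', hlt, hpow⟩ := hG.exists_subquotient hnil
      (fun s hs => ⟨Module.End.range_pow_le_comap (hcomm s hs) i,
        Module.End.range_pow_le_comap (hcomm s hs) (i + 1)⟩) hcG hc0
      (by rintro _ ⟨v, rfl⟩; exact ⟨v, by rw [pow_succ', Module.End.mul_apply]⟩)
    obtain ⟨n, hn⟩ := ih _ (hd ▸ hlt) hG' hnil' rfl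
    exact ⟨n, hpow n hn⟩
  have hflag : ∀ k, ∃ n,
      (G0 ⊔ G1) ^ n ≤ (⊤ : Submodule F V).compatibleMaps (LinearMap.range (c ^ k)) := by
    intro k
    induction k with
    | zero => exact ⟨0, fun f _ v _ => by simp⟩
    | succ k ihk =>
      obtain ⟨a, ha⟩ := hlayer k
      obtain ⟨b, hb⟩ := ihk
      exact ⟨a + b, Submodule.pow_add_le_compatibleMaps ha hb⟩
  obtain ⟨n, hn⟩ := hflag q
  rw [hq, LinearMap.range_zero, Submodule.compatibleMaps_top_bot] at hn
  exact ⟨n, le_bot_iff.1 hn⟩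

end IsSuperSubalgebra

namespace LieSuperStruct

variable {F L : Type*} [Field F] [AddCommGroup L] [Module F L] (S : LieSuperStruct F L)

lemma exists_add_eq (x : L) : ∃ x0 ∈ S.L0, ∃ x1 ∈ S.L1, x0 + x1 = x :=
  Submodule.mem_sup.1 (S.compl.sup_eq_top ▸ Submodule.mem_top)

lemma bracket_mem_bracketSpan {M N : Submodule F L} {x y : L} (hx : x ∈ M) (hy : y ∈ N) :
    S.bracket x y ∈ S.bracketSpan M N :=
  Submodule.subset_span ⟨x, hx, y, hy, rfl⟩

lemma bracketSpan_mono {M M' N N' : Submodule F L} (hM : M ≤ M') (hN : N ≤ N') :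
    S.bracketSpan M N ≤ S.bracketSpan M' N' :=
  Submodule.span_mono fun _ ⟨x, hx, y, hy, h⟩ => ⟨x, hM hx, y, hN hy, h⟩

lemma bracket_bracket_eq_commutator {x : L} (hx : x ∈ S.L0) (y : L) :
    S.bracket (S.bracket x y) = S.bracket x * S.bracket y - S.bracket y * S.bracket x := by
  ext z
  simp [S.jacobi_even x hx y z]

lemma bracket_bracket_eq_anticommutator {z w : L} (hz : z ∈ S.L1) (hw : w ∈ S.L1) :
    S.bracket (S.bracket z w) = S.bracket z * S.bracket w + S.bracket w * S.bracket z := by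
  ext u
  simp [S.jacobi_odd_odd z hz w hw u]

lemma isSuperSubalgebra_map {A : Type*} [Ring A] [Algebra F A] (f : L →ₗ[F] A)
    (hf0 : ∀ x ∈ S.L0, ∀ y, f (S.bracket x y) = f x * f y - f y * f x)
    (hf1 : ∀ z ∈ S.L1, ∀ w ∈ S.L1, f (S.bracket z w) = f z * f w + f w * f z) :
    IsSuperSubalgebra (S.L0.map f) (S.L1.map f) where
  commutator_mem := by
    rintro _ ⟨x, hx, rfl⟩ _ ⟨y, hy, rfl⟩
    exact ⟨_, S.grade00 x hx y hy, hf0 x hx y⟩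
  commutator_mem_odd := by
    rintro _ ⟨x, hx, rfl⟩ _ ⟨z, hz, rfl⟩
    exact ⟨_, S.grade01 x hx z hz, hf0 x hx z⟩
  anticommutator_mem := by
    rintro _ ⟨z, hz, rfl⟩ _ ⟨w, hw, rfl⟩
    exact ⟨_, S.grade11 z hz w hw, hf1 z hz w hw⟩

section Subquotient

variable {W N : Submodule F L} (hW : ∀ x, S.bracket x ∈ W.pairStabilizer N)

def adStab : L →ₗ[F] W.pairStabilizer N where
  toFun x := ⟨S.bracket x, hW x⟩
  map_add' x y := Subtype.ext (map_add _ x y)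
  map_smul' c x := Subtype.ext (map_smul _ c x)

def subquotientAd : L →ₗ[F] End F (W ⧸ N.comap W.subtype) :=
  (W.subquotientAction N).toLinearMap ∘ₗ S.adStab hW

lemma finiteDimensional_range_subquotientAd {K : Submodule F L} [FiniteDimensional F (L ⧸ K)]
    (hK : ∀ a ∈ K, S.bracket a ∈ W.compatibleMaps N) :
    FiniteDimensional F (LinearMap.range (S.subquotientAd hW)) := by
  have hle : K ≤ LinearMap.ker (S.subquotientAd hW) :=
    fun a ha => (Submodule.subquotientAction_eq_zero_iff _).2 (hK a ha)
  rw [← Submodule.range_liftQ _ _ hle]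
  infer_instance

variable {S}

theorem exists_pow_range_bracket_le (h2 : (2 : F) ≠ 0)
    (had : ∀ x ∈ S.L0, _root_.IsNilpotent (S.bracket x))
    (hfin : FiniteDimensional F (LinearMap.range (S.subquotientAd hW))) :
    ∃ n, LinearMap.range S.bracket ^ n ≤ W.compatibleMaps N := by
  set φ := W.subquotientAction N
  set ψ := S.subquotientAd hW
  have hψ0 : ∀ x ∈ S.L0, ∀ y, ψ (S.bracket x y) = ψ x * ψ y - ψ y * ψ x := fun x hx y => by
    simp only [ψ, subquotientAd, LinearMap.comp_apply, AlgHom.toLinearMap_apply, ← map_mul,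
      ← map_sub]
    exact congrArg φ (Subtype.ext (S.bracket_bracket_eq_commutator hx y))
  have hψ1 : ∀ z ∈ S.L1, ∀ w ∈ S.L1, ψ (S.bracket z w) = ψ z * ψ w + ψ w * ψ z :=
    fun z hz w hw => by
    simp only [ψ, subquotientAd, LinearMap.comp_apply, AlgHom.toLinearMap_apply, ← map_mul,
      ← map_add]
    exact congrArg φ (Subtype.ext (S.bracket_bracket_eq_anticommutator hz hw))
  have : FiniteDimensional F (S.L0.map ψ) :=
    Submodule.finiteDimensional_of_le (LinearMap.map_le_range (f := ψ))
  have : FiniteDimensional F (S.L1.map ψ) :=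
    Submodule.finiteDimensional_of_le (LinearMap.map_le_range (f := ψ))
  obtain ⟨n, hn⟩ := (S.isSuperSubalgebra_map ψ hψ0 hψ1).exists_sup_pow_eq_bot h2 (by
    rintro _ ⟨x, hx, rfl⟩
    obtain ⟨k, hk⟩ := had x hx
    exact IsNilpotent.map (⟨k, Subtype.ext (by simpa [adStab] using hk)⟩ :
      _root_.IsNilpotent (S.adStab hW x)) φ)
  have hsup : S.L0.map ψ ⊔ S.L1.map ψ = (LinearMap.range (S.adStab hW)).map φ.toLinearMap := by
    rw [← Submodule.map_sup, S.compl.sup_eq_top, Submodule.map_top]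
    exact LinearMap.range_comp _ _
  have hval : (LinearMap.range (S.adStab hW)).map (W.pairStabilizer N).val.toLinearMap =
      LinearMap.range S.bracket := by
    rw [← LinearMap.range_comp]
    rfl
  exact ⟨n, hval ▸ Submodule.pow_map_val_le_compatibleMaps (hsup ▸ hn)⟩

end Subquotient

variable {S}

lemma IsHomogeneous.exists_add_eq {A : Submodule F L} (hA : S.IsHomogeneous A) {a : L}
    (ha : a ∈ A) : ∃ a0 ∈ A ⊓ S.L0, ∃ a1 ∈ A ⊓ S.L1, a0 + a1 = a :=
  Submodule.mem_sup.1 (hA.le ha)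

lemma isHomogeneous_of_le {A : Submodule F L} (h : A ≤ A ⊓ S.L0 ⊔ A ⊓ S.L1) :
    S.IsHomogeneous A :=
  le_antisymm h (sup_le inf_le_left inf_le_left)

variable (S) in
lemma isHomogeneous_top : S.IsHomogeneous ⊤ :=
  isHomogeneous_of_le (by simp [S.compl.sup_eq_top])

lemma IsHomogeneous.bracketSpan {M N : Submodule F L} (hM : S.IsHomogeneous M)
    (hN : S.IsHomogeneous N) : S.IsHomogeneous (S.bracketSpan M N) := by
  refine isHomogeneous_of_le (Submodule.span_le.2 ?_)
  rintro _ ⟨m, hm, n, hn, rfl⟩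
  obtain ⟨m0, ⟨hm0, hm0'⟩, m1, ⟨hm1, hm1'⟩, rfl⟩ := hM.exists_add_eq hm
  obtain ⟨n0, ⟨hn0, hn0'⟩, n1, ⟨hn1, hn1'⟩, rfl⟩ := hN.exists_add_eq hn
  simp only [map_add, LinearMap.add_apply]
  refine add_mem (add_mem ?_ ?_) (add_mem ?_ ?_)
  · exact Submodule.mem_sup_left ⟨S.bracket_mem_bracketSpan hm0 hn0, S.grade00 _ hm0' _ hn0'⟩
  · exact Submodule.mem_sup_right ⟨S.bracket_mem_bracketSpan hm1 hn0, S.grade10 _ hm1' _ hn0'⟩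
  · exact Submodule.mem_sup_right ⟨S.bracket_mem_bracketSpan hm0 hn1, S.grade01 _ hm0' _ hn1'⟩
  · exact Submodule.mem_sup_left ⟨S.bracket_mem_bracketSpan hm1 hn1, S.grade11 _ hm1' _ hn1'⟩

lemma IsHomogeneous.bracketSpan_le_swap {M N : Submodule F L} (hM : S.IsHomogeneous M)
    (hN : S.IsHomogeneous N) : S.bracketSpan M N ≤ S.bracketSpan N M := by
  refine Submodule.span_le.2 ?_
  rintro _ ⟨m, hm, n, hn, rfl⟩
  obtain ⟨m0, ⟨hm0, hm0'⟩, m1, ⟨hm1, hm1'⟩, rfl⟩ := hM.exists_add_eq hm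
  obtain ⟨n0, ⟨hn0, hn0'⟩, n1, ⟨hn1, hn1'⟩, rfl⟩ := hN.exists_add_eq hn
  have h0 : S.bracket m0 (n0 + n1) = -S.bracket (n0 + n1) m0 := S.anti_even m0 hm0' _
  have h1 : S.bracket m1 n0 = -S.bracket n0 m1 := by rw [S.anti_even n0 hn0' m1, neg_neg]
  have h2 : S.bracket m1 n1 = S.bracket n1 m1 := S.anti_odd m1 hm1' n1 hn1'
  rw [S.bracket.map_add, LinearMap.add_apply, h0, (S.bracket m1).map_add, h1, h2]
  exact add_mem (neg_mem (S.bracket_mem_bracketSpan (add_mem hn0 hn1) hm0))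
    (add_mem (neg_mem (S.bracket_mem_bracketSpan hn0 hm1)) (S.bracket_mem_bracketSpan hn1 hm1))

variable (S) in
lemma isHomogeneous_lcs (k : ℕ) : S.IsHomogeneous (S.lcs k) := by
  induction k with
  | zero => exact S.isHomogeneous_top
  | succ k ih => exact ih.bracketSpan S.isHomogeneous_top

variable (S) in
lemma lcs_le_iterate_bracketSpan (k : ℕ) : S.lcs k ≤ (S.bracketSpan ⊤ ·)^[k] ⊤ := by
  induction k with
  | zero => exact le_rfl
  | succ k ih =>
    rw [Function.iterate_succ_apply']
    exact ((S.isHomogeneous_lcs k).bracketSpan_le_swap S.isHomogeneous_top).trans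
      (S.bracketSpan_mono le_rfl ih)

lemma iterate_bracketSpan_le {k : ℕ} {Q P : Submodule F L}
    (h : LinearMap.range S.bracket ^ k ≤ Q.compatibleMaps P) :
    (S.bracketSpan ⊤ ·)^[k] Q ≤ P := by
  induction k generalizing Q with
  | zero => exact fun v hv => h (Submodule.one_le.1 (pow_zero _).ge) hv
  | succ k ih =>
    refine ih fun f hf => Submodule.span_le.2 ?_
    rintro _ ⟨x, -, q, hq, rfl⟩
    rw [pow_succ] at h
    exact h (Submodule.mul_mem_mul hf (LinearMap.mem_range_self _ x)) hq

lemma isNilpotent_of_range_bracket_pow_eq_bot {n : ℕ}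
    (h : LinearMap.range S.bracket ^ n = ⊥) : S.IsNilpotent :=
  ⟨n, le_bot_iff.1 ((S.lcs_le_iterate_bracketSpan n).trans
    (iterate_bracketSpan_le (h ▸ bot_le)))⟩

lemma IsIdeal.bracket_mem_bracketSpan_self {A : Submodule F L} (hA : S.IsIdeal A)
    (hAh : S.IsHomogeneous A) (x : L) {v : L} (hv : v ∈ S.bracketSpan A A) :
    S.bracket x v ∈ S.bracketSpan A A := by
  induction hv using Submodule.span_induction with
  | mem _ h =>
    obtain ⟨a, ha, b, hb, rfl⟩ := h
    have mem {u w : L} : u ∈ A → w ∈ A → S.bracket u w ∈ S.bracketSpan A A :=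
      S.bracket_mem_bracketSpan
    obtain ⟨x0, hx0, x1, hx1, rfl⟩ := S.exists_add_eq x
    obtain ⟨a0, ⟨ha0, ha0'⟩, a1, ⟨ha1, ha1'⟩, rfl⟩ := hAh.exists_add_eq ha
    have hx0a : S.bracket x0 (S.bracket (a0 + a1) b) ∈ S.bracketSpan A A := by
      rw [S.jacobi_even x0 hx0]
      exact add_mem (mem (hA _ ha x0).2 hb) (mem ha (hA b hb x0).2)
    have hx1a0 : S.bracket x1 (S.bracket a0 b) ∈ S.bracketSpan A A := by
      rw [S.jacobi_odd_even x1 hx1 a0 ha0']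
      exact add_mem (mem (hA a0 ha0 x1).2 hb) (mem ha0 (hA b hb x1).2)
    have hx1a1 : S.bracket x1 (S.bracket a1 b) ∈ S.bracketSpan A A := by
      rw [S.jacobi_odd_odd x1 hx1 a1 ha1']
      exact sub_mem (mem (hA a1 ha1 x1).2 hb) (mem ha1 (hA b hb x1).2)
    rw [S.bracket.map_add, LinearMap.add_apply]
    refine add_mem hx0a ?_
    rw [S.bracket.map_add, LinearMap.add_apply, map_add]
    exact add_mem hx1a0 hx1a1
  | zero => simp
  | add _ _ _ _ hu hv => rw [map_add]; exact add_mem hu hv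
  | smul c _ _ hu => rw [map_smul]; exact Submodule.smul_mem _ c hu

end LieSuperStruct

theorem restricted_nilpotent_of_ideal_general {F L : Type*} [Field F] [AddCommGroup L]
    [Module F L] (p : ℕ) [CharP F p] (hp : 2 < p)
    (S : RestrictedLieSuperStruct F L p)
    (had : ∀ x ∈ S.L0, IsNilpotent (S.toLieSuperStruct.ad x))
    (A : Submodule F L)
    (hAideal : S.toLieSuperStruct.IsIdeal A)
    (hAhom : S.toLieSuperStruct.IsHomogeneous A)
    (hcodim : FiniteDimensional F (L ⧸ A))
    (hder : FiniteDimensional F (S.toLieSuperStruct.bracketSpan A A)) :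
    S.toLieSuperStruct.IsNilpotent := by
  set T := S.toLieSuperStruct
  have h2 : (2 : F) ≠ 0 := Ring.two_ne_zero (by rw [ringChar.eq F p]; omega)
  have hAA : ∀ x, T.bracketSpan A A ≤ (T.bracketSpan A A).comap (T.bracket x) :=
    fun x _ hv => hAideal.bracket_mem_bracketSpan_self hAhom x hv
  -- layers `L ⊇ A ⊇ (A, A) ⊇ 0`: `A` acts trivially on the first two, the last is finite
  obtain ⟨n₁, h₁⟩ := LieSuperStruct.exists_pow_range_bracket_le (W := ⊤) (N := A)
    (fun x => ⟨fun _ _ => trivial, fun a ha => (hAideal a ha x).2⟩) h2 had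
    (T.finiteDimensional_range_subquotientAd _ fun a ha v _ => (hAideal a ha v).1)
  obtain ⟨n₂, h₂⟩ := LieSuperStruct.exists_pow_range_bracket_le (W := A) (N := T.bracketSpan A A)
    (fun x => ⟨fun a ha => (hAideal a ha x).2, hAA x⟩) h2 had
    (T.finiteDimensional_range_subquotientAd _ fun a ha _ hb => T.bracket_mem_bracketSpan ha hb)
  obtain ⟨n₃, h₃⟩ := LieSuperStruct.exists_pow_range_bracket_le (W := T.bracketSpan A A) (N := ⊥)
    (fun x => ⟨hAA x, fun v hv => by simp [(Submodule.mem_bot F).1 hv]⟩) h2 had inferInstance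
  have h := Submodule.pow_add_le_compatibleMaps h₃ (Submodule.pow_add_le_compatibleMaps h₂ h₁)
  rw [Submodule.compatibleMaps_top_bot] at h
  exact LieSuperStruct.isNilpotent_of_range_bracket_pow_eq_bot (le_bot_iff.1 h)

/-- a restricted Lie superalgebra with ad-nilpotent even part, a
homogeneous restricted ideal `A` of finite codimension with `A'` finite-dimensional
and `(A',A') = 0`, and `(L₁,L₁)` `p`-nilpotent or `(L₀,L₁) = 0`, is nilpotent. -/
theorem restricted_nilpotent_of_ideal {F L : Type*} [Field F] [AddCommGroup L]
    [Module F L] (p : ℕ) [CharP F p] (hp : 2 < p)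
    (S : RestrictedLieSuperStruct F L p)
    (had : ∀ x ∈ S.L0, IsNilpotent (S.toLieSuperStruct.ad x))
    (A : Submodule F L)
    (hAideal : S.toLieSuperStruct.IsIdeal A)
    (hAhom : S.toLieSuperStruct.IsHomogeneous A)
    (hAres : S.IsRestricted A)
    (hcodim : FiniteDimensional F (L ⧸ A))
    (hder : FiniteDimensional F (S.toLieSuperStruct.bracketSpan A A))
    (hderab : S.toLieSuperStruct.bracketSpan
        (S.toLieSuperStruct.bracketSpan A A) (S.toLieSuperStruct.bracketSpan A A) = ⊥)
    (halt : S.IsPNilpotentSet (S.toLieSuperStruct.bracketSpan S.L1 S.L1 : Set L) ∨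
      S.toLieSuperStruct.bracketSpan S.L0 S.L1 = ⊥) :
    S.toLieSuperStruct.IsNilpotent :=
  restricted_nilpotent_of_ideal_general p hp S had A hAideal hAhom hcodim hder
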